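/- arXiv:2104.12477 — 3 statements merged into one kernel-verified Lean document; each statement's English description precedes it below -/
import Mathlib

section
/- Let l be a symmetric loss with Σ_{y=1}^C l(z,y) = K constant, and suppose ρ < (C−1)/C. Let 𝒵 be a set of ℝ^C-valued random variables of the form f(X) for measurable f, with l(Z,Y) and l(Z,Ȳ) integrable for all Z ∈ 𝒵. Then argmin_{Z∈𝒵} E[l(Z,Ȳ)] ⊆ argmin_{Z∈𝒵} E[l(Z,Y)]; that is, every minimizer of the noisy risk is a minimizer of the clean risk, so l is robust to uniform label noise. -/
/-! Under uniform label noise the noisy risk of a symmetric loss is an affine function of the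
clean risk, `E[l(Z,Ȳ)] = (1 - ρ C/(C-1)) E[l(Z,Y)] + ρ K/(C-1)`, because the off-label sum
`∑_{i ≠ Y} l(Z,i)` equals `K - l(Z,Y)`. The slope `1 - ρ C/(C-1)` is positive exactly when
`ρ < (C-1)/C`, so both risks have the same minimizers. -/

open MeasureTheory

/-- `Ybar` is a uniformly noisy version of `Y` at noise level `ρ` (expectation form of
`P(Ȳ=i | Y,X) = ρ/(C−1)` for `i ≠ Y` and `1−ρ` for `i = Y`). -/
def UniformLabelNoise {Ω 𝒳 : Type*} [MeasurableSpace Ω] (P : Measure Ω) (C : ℕ) (ρ : ℝ)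
    (X : Ω → 𝒳) (Y Ybar : Ω → Fin C) : Prop :=
  ∀ h : 𝒳 → Fin C → ℝ,
    Integrable (fun ω => h (X ω) (Ybar ω)) P →
    Integrable (fun ω => h (X ω) (Y ω)) P →
    (∀ i, Integrable (fun ω => h (X ω) i) P) →
    ∫ ω, h (X ω) (Ybar ω) ∂P =
      (1 - ρ) * ∫ ω, h (X ω) (Y ω) ∂P
        + (ρ / ((C : ℝ) - 1)) * ∫ ω, (∑ i : Fin C, if i = Y ω then 0 else h (X ω) i) ∂P

theorem Fintype.sum_ite_eq_zero_else {ι M : Type*} [Fintype ι] [DecidableEq ι] [AddCommGroup M]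
    (g : ι → M) (y : ι) :
    ∑ i, (if i = y then 0 else g i) = ∑ i, g i - g y := by
  simp [Finset.sum_ite, Finset.filter_ne', Finset.sum_erase_eq_sub]

theorem one_sub_sub_div_pos {ρ c : ℝ} (hc : 1 < c) (hρ : ρ < (c - 1) / c) :
    0 < 1 - ρ - ρ / (c - 1) := by
  have hc1 : 0 < c - 1 := sub_pos.mpr hc
  have hρc : ρ * c < c - 1 := (lt_div_iff₀ (by linarith)).mp hρ
  have h : 1 - ρ - ρ / (c - 1) = (c - 1 - ρ * c) / (c - 1) := by
    field_simp
    ring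
  rw [h]
  exact div_pos (by linarith) hc1

theorem UniformLabelNoise.integral_eq_of_sum_eq {Ω 𝒳 : Type*} [MeasurableSpace Ω]
    {P : Measure Ω} [IsProbabilityMeasure P] {C : ℕ} {ρ : ℝ} {X : Ω → 𝒳} {Y Ybar : Ω → Fin C}
    (hnoise : UniformLabelNoise P C ρ X Y Ybar) {h : 𝒳 → Fin C → ℝ} {K : ℝ}
    (hsum : ∀ x, ∑ y, h x y = K)
    (hint_noisy : Integrable (fun ω => h (X ω) (Ybar ω)) P)
    (hint_clean : Integrable (fun ω => h (X ω) (Y ω)) P)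
    (hint : ∀ i, Integrable (fun ω => h (X ω) i) P) :
    ∫ ω, h (X ω) (Ybar ω) ∂P =
      (1 - ρ - ρ / ((C : ℝ) - 1)) * ∫ ω, h (X ω) (Y ω) ∂P + ρ / ((C : ℝ) - 1) * K := by
  have hoff : ∀ ω, (∑ i, if i = Y ω then 0 else h (X ω) i) = K - h (X ω) (Y ω) := fun ω => by
    rw [Fintype.sum_ite_eq_zero_else, hsum]
  simp_rw [hnoise h hint_noisy hint_clean hint, hoff,
    integral_sub (integrable_const K) hint_clean, integral_const, probReal_univ, one_smul]
  ring
theorem stmt2_general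
    {Ω 𝒳 : Type*} [MeasurableSpace Ω] [MeasurableSpace 𝒳]
    (P : Measure Ω) [IsProbabilityMeasure P]
    (C : ℕ) (hC : 2 ≤ C) (ρ : ℝ) (hρ : ρ < ((C : ℝ) - 1) / C)
    (X : Ω → 𝒳) (Y Ybar : Ω → Fin C)
    (hnoise : UniformLabelNoise P C ρ X Y Ybar)
    (l : (Fin C → ℝ) → Fin C → ℝ) (K : ℝ)
    (hsym : ∀ z, ∑ y : Fin C, l z y = K)
    (𝒵 : Set (Ω → Fin C → ℝ))
    (h𝒵 : ∀ Z ∈ 𝒵, ∃ f : 𝒳 → Fin C → ℝ, Measurable f ∧ Z = fun ω => f (X ω))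
    (hint1 : ∀ Z ∈ 𝒵, Integrable (fun ω => l (Z ω) (Ybar ω)) P)
    (hint2 : ∀ Z ∈ 𝒵, Integrable (fun ω => l (Z ω) (Y ω)) P)
    (hint3 : ∀ Z ∈ 𝒵, ∀ i, Integrable (fun ω => l (Z ω) i) P) :
    ∀ Zbar ∈ 𝒵,
      (∀ W ∈ 𝒵, ∫ ω, l (Zbar ω) (Ybar ω) ∂P ≤ ∫ ω, l (W ω) (Ybar ω) ∂P) →
      (∀ W ∈ 𝒵, ∫ ω, l (Zbar ω) (Y ω) ∂P ≤ ∫ ω, l (W ω) (Y ω) ∂P) := by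
  have hrisk : ∀ Z ∈ 𝒵, ∫ ω, l (Z ω) (Ybar ω) ∂P =
      (1 - ρ - ρ / ((C : ℝ) - 1)) * ∫ ω, l (Z ω) (Y ω) ∂P + ρ / ((C : ℝ) - 1) * K := by
    intro Z hZ
    obtain ⟨f, -, rfl⟩ := h𝒵 Z hZ
    exact hnoise.integral_eq_of_sum_eq (h := fun x => l (f x)) (fun x => hsym (f x))
      (hint1 _ hZ) (hint2 _ hZ) (hint3 _ hZ)
  have hslope : 0 < 1 - ρ - ρ / ((C : ℝ) - 1) :=
    one_sub_sub_div_pos (by exact_mod_cast hC) hρ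
  intro Zbar hZbar hmin W hW
  have h := hmin W hW
  rw [hrisk Zbar hZbar, hrisk W hW, add_le_add_iff_right] at h
  exact le_of_mul_le_mul_left h hslope

/-- For a symmetric loss `l` and `ρ < (C−1)/C`, every minimizer over `𝒵` of the noisy
risk `E[l(Z,Ȳ)]` is a minimizer of the clean risk `E[l(Z,Y)]`: the symmetric loss `l`
is robust to uniform label noise. -/
theorem stmt2
    {Ω 𝒳 : Type*} [MeasurableSpace Ω] [MeasurableSpace 𝒳]
    (P : Measure Ω) [IsProbabilityMeasure P]
    (C : ℕ) (hC : 2 ≤ C) (ρ : ℝ) (hρ0 : 0 ≤ ρ) (hρ : ρ < ((C : ℝ) - 1) / C)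
    (X : Ω → 𝒳) (Y Ybar : Ω → Fin C)
    (hX : Measurable X) (hY : Measurable Y) (hYbar : Measurable Ybar)
    (hnoise : UniformLabelNoise P C ρ X Y Ybar)
    (l : (Fin C → ℝ) → Fin C → ℝ) (K : ℝ)
    (hsym : ∀ z, ∑ y : Fin C, l z y = K)
    (𝒵 : Set (Ω → Fin C → ℝ))
    (h𝒵 : ∀ Z ∈ 𝒵, ∃ f : 𝒳 → Fin C → ℝ, Measurable f ∧ Z = fun ω => f (X ω))
    (hint1 : ∀ Z ∈ 𝒵, Integrable (fun ω => l (Z ω) (Ybar ω)) P)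
    (hint2 : ∀ Z ∈ 𝒵, Integrable (fun ω => l (Z ω) (Y ω)) P)
    (hint3 : ∀ Z ∈ 𝒵, ∀ i, Integrable (fun ω => l (Z ω) i) P) :
    ∀ Zbar ∈ 𝒵,
      (∀ W ∈ 𝒵, ∫ ω, l (Zbar ω) (Ybar ω) ∂P ≤ ∫ ω, l (W ω) (Ybar ω) ∂P) →
      (∀ W ∈ 𝒵, ∫ ω, l (Zbar ω) (Y ω) ∂P ≤ ∫ ω, l (W ω) (Y ω) ∂P) :=
  stmt2_general P C hC ρ hρ X Y Ybar hnoise l K hsym 𝒵 h𝒵 hint1 hint2 hint3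
end

section
/- Assume the set 𝒵 of ℝ^C-valued random variables satisfies: for all t > 0, Z ∈ 𝒵 if and only if tZ ∈ 𝒵. Then the square loss with the modified one-hot encoding, l(z,y) = ‖z − onehot*(y)‖², is robust to uniform label noise: every minimizer of E[‖Z − onehot*(Ȳ)‖²] over 𝒵 admits a minimizer of E[‖Z − onehot*(Y)‖²] over 𝒵 with almost surely equal predictions pred(Z) = argmax_i Z_i. -/
open MeasureTheory

/-- The modified one-hot encoding `onehot*(y) = onehot(y) - (1/C)·𝟙`. -/
noncomputable def onehotStar (C : ℕ) (y : Fin C) : Fin C → ℝ :=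
  fun i => (if i = y then (1 : ℝ) else 0) - 1 / (C : ℝ)

/-- The square loss with modified one-hot targets, `‖z − onehot*(y)‖²`. -/
noncomputable def sqLoss (C : ℕ) (z : Fin C → ℝ) (y : Fin C) : ℝ :=
  ∑ i, (z i - onehotStar C y i) ^ 2

/-- The set of predictions `argmax_i z_i` of an output vector `z`. -/
def predSet (C : ℕ) (z : Fin C → ℝ) : Set (Fin C) := {i | ∀ j, z j ≤ z i}

/-!
Writing `a = 1 - ρC/(C-1)`, uniform noise turns the noisy risk of `Z` into
`a·E l(Z,Y) + (1-a)/C · E ∑ᵢ l(Z,i)`. For the modified one-hot encoding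
`∑ᵢ l(z,i) = C‖z‖² + C - 1`, and expanding `l(a z, y)` shows that the noisy risk of `a • W`
equals `a² · E l(W,Y)` plus a constant. Since `0 < a` and `𝒵` is stable under positive
scaling, `W ↦ a • W` maps clean minimizers to noisy ones and back, so `a⁻¹ • Z̄` is a clean
minimizer with the same argmax as `Z̄`.
-/

open Finset

/-- The weight `1 - ρC/(C-1)` with which the clean risk enters the noisy one. -/
noncomputable def noiseFactor (C : ℕ) (ρ : ℝ) : ℝ := 1 - ρ * C / (C - 1)

lemma noiseFactor_pos {C : ℕ} (hC : 2 ≤ C) {ρ : ℝ} (hρ : ρ < ((C : ℝ) - 1) / C) :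
    0 < noiseFactor C ρ := by
  have hC' : (2 : ℝ) ≤ C := by exact_mod_cast hC
  have hρC : ρ * C < C - 1 := (lt_div_iff₀ (by linarith)).mp hρ
  rw [noiseFactor, sub_pos, div_lt_one (by linarith)]
  exact hρC

lemma sqLoss_eq {C : ℕ} (z : Fin C → ℝ) (y : Fin C) :
    sqLoss C z y = ∑ j, z j ^ 2 - 2 * (z y - (∑ j, z j) / C) + (1 - 1 / C) := by
  have hC : (C : ℝ) ≠ 0 := Nat.cast_ne_zero.2 (Fin.pos y).ne'
  have hterm : ∀ j, (z j - onehotStar C y j) ^ 2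
      = z j ^ 2 + (if j = y then -2 * z j + (1 - 2 / C) else 0) + 2 / C * z j + 1 / C ^ 2 := by
    intro j
    by_cases h : j = y <;> simp only [onehotStar, h, if_true, if_false] <;> field_simp <;> ring
  simp only [sqLoss, hterm, sum_add_distrib, sum_ite_eq', mem_univ, if_true, ← mul_sum,
    sum_const, card_univ, Fintype.card_fin, nsmul_eq_mul]
  field_simp
  ring

lemma sum_sqLoss {C : ℕ} (hC : C ≠ 0) (z : Fin C → ℝ) :
    ∑ i, sqLoss C z i = C * ∑ j, z j ^ 2 + (C - 1) := by
  have hC' : (C : ℝ) ≠ 0 := Nat.cast_ne_zero.2 hC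
  simp only [sqLoss_eq, sum_add_distrib, sum_sub_distrib, ← mul_sum, sum_const, card_univ,
    Fintype.card_fin, nsmul_eq_mul]
  field_simp
  ring

lemma sqLoss_smul {C : ℕ} (t : ℝ) (z : Fin C → ℝ) (y : Fin C) :
    sqLoss C (t • z) y
      = t * sqLoss C z y + (t ^ 2 - t) * ∑ j, z j ^ 2 + (1 - t) * (1 - 1 / C) := by
  simp only [sqLoss_eq, Pi.smul_apply, smul_eq_mul, mul_pow, ← mul_sum]
  ring

/-- With `a` the noise factor, the `‖z‖²` terms cancel. -/
lemma mul_sqLoss_smul_add_sum_sqLoss_smul {C : ℕ} (a : ℝ) (z : Fin C → ℝ) (y : Fin C) :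
    a * sqLoss C (a • z) y + (1 - a) / C * ∑ i, sqLoss C (a • z) i
      = a ^ 2 * sqLoss C z y + (1 - a ^ 2) * (1 - 1 / C) := by
  have hC : (C : ℝ) ≠ 0 := Nat.cast_ne_zero.2 (Fin.pos y).ne'
  rw [sum_sqLoss (Fin.pos y).ne', sqLoss_smul]
  simp only [Pi.smul_apply, smul_eq_mul, mul_pow, ← mul_sum]
  field_simp
  ring

section UniformLabelNoise

variable {Ω 𝒳 : Type*} [MeasurableSpace Ω] {P : Measure Ω} {C : ℕ} {ρ : ℝ}
  {X : Ω → 𝒳} {Y Ybar : Ω → Fin C}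

lemma integral_sqLoss_noisy (hC : 2 ≤ C) (hnoise : UniformLabelNoise P C ρ X Y Ybar)
    {Z : Ω → Fin C → ℝ} (f : 𝒳 → Fin C → ℝ) (hZ : ∀ ω, Z ω = f (X ω))
    (h1 : Integrable (fun ω => sqLoss C (Z ω) (Ybar ω)) P)
    (h2 : Integrable (fun ω => sqLoss C (Z ω) (Y ω)) P)
    (h3 : ∀ i, Integrable (fun ω => sqLoss C (Z ω) i) P) :
    ∫ ω, sqLoss C (Z ω) (Ybar ω) ∂P
      = ∫ ω, (noiseFactor C ρ * sqLoss C (Z ω) (Y ω)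
          + (1 - noiseFactor C ρ) / C * ∑ i, sqLoss C (Z ω) i) ∂P := by
  have hC' : (2 : ℝ) ≤ C := by exact_mod_cast hC
  have hC0 : (C : ℝ) ≠ 0 := by positivity
  have hC1 : (C : ℝ) - 1 ≠ 0 := by linarith
  have hsum : Integrable (fun ω => ∑ i, sqLoss C (Z ω) i) P :=
    integrable_finsetSum _ fun i _ => h3 i
  have hnoiseZ := hnoise (fun x i => sqLoss C (f x) i)
  simp only [← hZ] at hnoiseZ
  have hcompl : ∀ ω, (∑ i, if i = Y ω then 0 else sqLoss C (Z ω) i)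
      = ∑ i, sqLoss C (Z ω) i - sqLoss C (Z ω) (Y ω) := by
    intro ω
    rw [← sum_erase_eq_sub (mem_univ _), sum_ite, filter_ne', sum_const_zero, zero_add]
  rw [hnoiseZ h1 h2 h3, integral_add (h2.const_mul _) (hsum.const_mul _),
    integral_const_mul, integral_const_mul]
  simp only [hcompl]
  rw [integral_sub hsum h2, noiseFactor]
  field_simp
  ring

lemma integral_sqLoss_noisy_smul [IsProbabilityMeasure P] (hC : 2 ≤ C)
    (hnoise : UniformLabelNoise P C ρ X Y Ybar) {Z : Ω → Fin C → ℝ} (f : 𝒳 → Fin C → ℝ)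
    (hZ : ∀ ω, noiseFactor C ρ • Z ω = f (X ω))
    (h1 : Integrable (fun ω => sqLoss C (noiseFactor C ρ • Z ω) (Ybar ω)) P)
    (h2 : Integrable (fun ω => sqLoss C (noiseFactor C ρ • Z ω) (Y ω)) P)
    (h3 : ∀ i, Integrable (fun ω => sqLoss C (noiseFactor C ρ • Z ω) i) P)
    (hZY : Integrable (fun ω => sqLoss C (Z ω) (Y ω)) P) :
    ∫ ω, sqLoss C (noiseFactor C ρ • Z ω) (Ybar ω) ∂P
      = noiseFactor C ρ ^ 2 * ∫ ω, sqLoss C (Z ω) (Y ω) ∂P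
        + (1 - noiseFactor C ρ ^ 2) * (1 - 1 / C) := by
  rw [integral_sqLoss_noisy hC hnoise f hZ h1 h2 h3]
  simp only [mul_sqLoss_smul_add_sum_sqLoss_smul]
  rw [integral_add (hZY.const_mul _) (integrable_const _), integral_const_mul, integral_const,
    probReal_univ, one_smul]

end UniformLabelNoise

lemma predSet_smul {C : ℕ} {t : ℝ} (ht : 0 < t) (z : Fin C → ℝ) :
    predSet C (t • z) = predSet C z := by
  ext i
  simp only [predSet, Set.mem_ofPred_eq, Pi.smul_apply, smul_eq_mul, mul_le_mul_iff_right₀ ht]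

theorem stmt5_general
    {Ω 𝒳 : Type*} [MeasurableSpace Ω] [MeasurableSpace 𝒳]
    (P : Measure Ω) [IsProbabilityMeasure P]
    (C : ℕ) (hC : 2 ≤ C) (ρ : ℝ) (hρ : ρ < ((C : ℝ) - 1) / C)
    (X : Ω → 𝒳) (Y Ybar : Ω → Fin C)
    (hnoise : UniformLabelNoise P C ρ X Y Ybar)
    (𝒵 : Set (Ω → Fin C → ℝ))
    (h𝒵 : ∀ Z ∈ 𝒵, ∃ f : 𝒳 → Fin C → ℝ, Measurable f ∧ Z = fun ω => f (X ω))
    (hscale : ∀ t : ℝ, 0 < t → ∀ Z : Ω → Fin C → ℝ, Z ∈ 𝒵 ↔ (fun ω => t • Z ω) ∈ 𝒵)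
    (hint1 : ∀ Z ∈ 𝒵, Integrable (fun ω => sqLoss C (Z ω) (Ybar ω)) P)
    (hint2 : ∀ Z ∈ 𝒵, Integrable (fun ω => sqLoss C (Z ω) (Y ω)) P)
    (hint3 : ∀ Z ∈ 𝒵, ∀ i, Integrable (fun ω => sqLoss C (Z ω) i) P) :
    ∀ Zbar ∈ 𝒵,
      (∀ W ∈ 𝒵,
        (∫ ω, sqLoss C (Zbar ω) (Ybar ω) ∂P) ≤ ∫ ω, sqLoss C (W ω) (Ybar ω) ∂P) →
      ∃ Zstar ∈ 𝒵,
        (∀ W ∈ 𝒵,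
          (∫ ω, sqLoss C (Zstar ω) (Y ω) ∂P) ≤ ∫ ω, sqLoss C (W ω) (Y ω) ∂P) ∧
        ∀ᵐ ω ∂P, predSet C (Zbar ω) = predSet C (Zstar ω) := by
  intro Zbar hZbar hmin
  set a := noiseFactor C ρ
  have ha : 0 < a := noiseFactor_pos hC hρ
  have hrisk : ∀ W ∈ 𝒵, (fun ω => a • W ω) ∈ 𝒵 →
      ∫ ω, sqLoss C (a • W ω) (Ybar ω) ∂P
        = a ^ 2 * ∫ ω, sqLoss C (W ω) (Y ω) ∂P + (1 - a ^ 2) * (1 - 1 / C) := by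
    intro W hW haW
    obtain ⟨f, -, hf⟩ := h𝒵 _ haW
    exact integral_sqLoss_noisy_smul hC hnoise f (congrFun hf) (hint1 _ haW) (hint2 _ haW)
      (hint3 _ haW) (hint2 _ hW)
  set Zstar := fun ω => a⁻¹ • Zbar ω
  have hZstar : Zstar ∈ 𝒵 := (hscale _ (inv_pos.2 ha) Zbar).1 hZbar
  have hZbar_eq : (fun ω => a • Zstar ω) = Zbar := by
    funext ω
    simp only [Zstar, smul_smul, mul_inv_cancel₀ ha.ne', one_smul]
  refine ⟨Zstar, hZstar, fun W hW => ?_, .of_forall fun ω => (predSet_smul (inv_pos.2 ha) _).symm⟩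
  have haW := (hscale a ha W).1 hW
  have hle := hmin _ haW
  rw [← hZbar_eq, hrisk _ hZstar (hZbar_eq ▸ hZbar), hrisk _ hW haW] at hle
  exact le_of_mul_le_mul_left (by linarith) (pow_pos ha 2)

/-- If `𝒵` is closed under positive scaling, then the square loss with modified one-hot
encoding `l(z,y) = ‖z − onehot*(y)‖²` is robust to uniform label noise: every minimizer
of `E[‖Z − onehot*(Ȳ)‖²]` over `𝒵` admits a minimizer of `E[‖Z − onehot*(Y)‖²]` over `𝒵`
with almost surely equal predictions. -/
theorem stmt5
    {Ω 𝒳 : Type*} [MeasurableSpace Ω] [MeasurableSpace 𝒳]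
    (P : Measure Ω) [IsProbabilityMeasure P]
    (C : ℕ) (hC : 2 ≤ C) (ρ : ℝ) (hρ0 : 0 ≤ ρ) (hρ : ρ < ((C : ℝ) - 1) / C)
    (X : Ω → 𝒳) (Y Ybar : Ω → Fin C)
    (hX : Measurable X) (hY : Measurable Y) (hYbar : Measurable Ybar)
    (hnoise : UniformLabelNoise P C ρ X Y Ybar)
    (𝒵 : Set (Ω → Fin C → ℝ))
    (h𝒵 : ∀ Z ∈ 𝒵, ∃ f : 𝒳 → Fin C → ℝ, Measurable f ∧ Z = fun ω => f (X ω))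
    (hscale : ∀ t : ℝ, 0 < t → ∀ Z : Ω → Fin C → ℝ, Z ∈ 𝒵 ↔ (fun ω => t • Z ω) ∈ 𝒵)
    (hint1 : ∀ Z ∈ 𝒵, Integrable (fun ω => sqLoss C (Z ω) (Ybar ω)) P)
    (hint2 : ∀ Z ∈ 𝒵, Integrable (fun ω => sqLoss C (Z ω) (Y ω)) P)
    (hint3 : ∀ Z ∈ 𝒵, ∀ i, Integrable (fun ω => sqLoss C (Z ω) i) P) :
    ∀ Zbar ∈ 𝒵,
      (∀ W ∈ 𝒵,
        (∫ ω, sqLoss C (Zbar ω) (Ybar ω) ∂P) ≤ ∫ ω, sqLoss C (W ω) (Ybar ω) ∂P) →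
      ∃ Zstar ∈ 𝒵,
        (∀ W ∈ 𝒵,
          (∫ ω, sqLoss C (Zstar ω) (Y ω) ∂P) ≤ ∫ ω, sqLoss C (W ω) (Y ω) ∂P) ∧
        ∀ᵐ ω ∂P, predSet C (Zbar ω) = predSet C (Zstar ω) :=
  stmt5_general P C hC ρ hρ X Y Ybar hnoise 𝒵 h𝒵 hscale hint1 hint2 hint3
end

section
/- For every p in the probability simplex in ℝ^C and every y ∈ {1,…,C}, the Mean Absolute Error loss satisfies ‖p − onehot(y)‖₁ = 2(1 − p_y); consequently Σ_{y=1}^C ‖p − onehot(y)‖₁ = 2(C − 1) for all p in the simplex, so the MAE loss is symmetric on the simplex. -/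
def onehot (C : ℕ) (y : Fin C) : Fin C → ℝ :=
  fun i => if i = y then 1 else 0

lemma onehot_eq_pi_single (C : ℕ) (y : Fin C) : onehot C y = Pi.single y 1 := by
  ext i
  simp [onehot, Pi.single_apply]

section Simplex

variable {ι : Type*} [Fintype ι] [DecidableEq ι] {p : ι → ℝ}

theorem sum_abs_sub_single_one (hp : ∀ i, 0 ≤ p i) (hsum : ∑ i, p i = 1) (y : ι) :
    ∑ i, |p i - (Pi.single y 1 : ι → ℝ) i| = 2 * (1 - p y) := by
  have hmass : ∑ i ∈ {y}ᶜ, p i = 1 - p y := by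
    rw [← hsum, Fintype.sum_eq_add_sum_compl y p]
    ring
  have hle : p y ≤ 1 := by linarith [Finset.sum_nonneg fun i (_ : i ∈ ({y}ᶜ : Finset ι)) => hp i]
  have hoff : ∑ i ∈ {y}ᶜ, |p i - (Pi.single y 1 : ι → ℝ) i| = ∑ i ∈ {y}ᶜ, p i := by
    refine Finset.sum_congr rfl fun i hi => ?_
    rw [Pi.single_eq_of_ne (by simpa using hi), sub_zero, abs_of_nonneg (hp i)]
  rw [Fintype.sum_eq_add_sum_compl y, hoff, hmass, Pi.single_eq_same, abs_of_nonpos (by linarith)]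
  ring

theorem sum_sum_abs_sub_single_one (hp : ∀ i, 0 ≤ p i) (hsum : ∑ i, p i = 1) :
    ∑ y, ∑ i, |p i - (Pi.single y 1 : ι → ℝ) i| = 2 * ((Fintype.card ι : ℝ) - 1) := by
  simp_rw [sum_abs_sub_single_one hp hsum, ← Finset.mul_sum, Finset.sum_sub_distrib, hsum,
    Finset.sum_const, Finset.card_univ, nsmul_eq_mul, mul_one]

end Simplex

theorem stmt14_general (C : ℕ) (p : Fin C → ℝ)
    (hp : ∀ i, 0 ≤ p i) (hsum : ∑ i, p i = 1) :
    (∀ y : Fin C, ∑ i, |p i - onehot C y i| = 2 * (1 - p y)) ∧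
      ∑ y : Fin C, ∑ i, |p i - onehot C y i| = 2 * ((C : ℝ) - 1) := by
  simp_rw [onehot_eq_pi_single]
  refine ⟨sum_abs_sub_single_one hp hsum, ?_⟩
  simpa using sum_sum_abs_sub_single_one hp hsum

/-- For `p` in the probability simplex, the Mean Absolute Error loss satisfies
`‖p − onehot(y)‖₁ = 2(1 − p_y)` for every label `y`; consequently
`Σ_y ‖p − onehot(y)‖₁ = 2(C − 1)`, so the MAE loss is symmetric on the simplex. -/
theorem stmt14 (C : ℕ) (hC : 1 ≤ C) (p : Fin C → ℝ)
    (hp : ∀ i, 0 ≤ p i) (hsum : ∑ i, p i = 1) :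
    (∀ y : Fin C, ∑ i, |p i - onehot C y i| = 2 * (1 - p y)) ∧
      ∑ y : Fin C, ∑ i, |p i - onehot C y i| = 2 * ((C : ℝ) - 1) :=
  stmt14_general C p hp hsum
end
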